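/- If R_a, R_e, R_ae arise as blocks of a positive semidefinite block covariance matrix, then for any vector v, v^T(Cov_BM - Cov_TSM)v = (α(1-α)/B)((v^T(μe-μa))^2 + v^T(R_a + R_e - R_ae - R_ae^T)v) ≥ 0; hence Cov_TSM ⪯ Cov_BM in the Loewner order. -/

import Mathlib

open Matrix

theorem Matrix.PosSemidef.add_sub_sub_of_fromBlocks {n R : Type*} [Fintype n] [DecidableEq n]
    [Ring R] [PartialOrder R] [StarRing R] {A B D : Matrix n n R}
    (h : (fromBlocks A B Bᴴ D).PosSemidef) : (A + D - B - Bᴴ).PosSemidef := by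
  convert h.conjTranspose_mul_mul_same (fromRows (1 : Matrix n n R) (-1)) using 1
  simp only [conjTranspose_fromRows_eq_fromCols_conjTranspose, fromCols_mul_fromBlocks,
    fromCols_mul_fromRows, conjTranspose_one, conjTranspose_neg, one_mul, neg_mul, mul_one,
    mul_neg]
  abel

/-- If R_a, R_e, R_ae arise as blocks of a PSD block covariance matrix, then the
covariance-difference matrix D = (α(1-α)/B)(ΔμΔμᵀ + R_a + R_e - R_ae - R_aeᵀ) is
positive semidefinite; equivalently vᵀ D v ≥ 0 for every v. -/
theorem cov_diff_posSemidef {d : ℕ} (α : ℝ) (hα : α ∈ Set.Icc (0 : ℝ) 1)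
    (B : ℝ) (hB : 0 < B) (Δμ : Fin d → ℝ)
    (Ra Re Rae : Matrix (Fin d) (Fin d) ℝ)
    (hblock : (Matrix.fromBlocks Ra Rae Raeᵀ Re).PosSemidef)
    (D : Matrix (Fin d) (Fin d) ℝ)
    (hD : D = (α * (1 - α) / B) • (vecMulVec Δμ Δμ + Ra + Re - Rae - Raeᵀ)) :
    D.PosSemidef ∧ ∀ v : Fin d → ℝ, 0 ≤ v ⬝ᵥ D *ᵥ v := by
  have hcoeff : 0 ≤ α * (1 - α) / B :=
    div_nonneg (mul_nonneg hα.1 (sub_nonneg.2 hα.2)) hB.le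
  have hmean : (vecMulVec Δμ Δμ).PosSemidef := posSemidef_vecMulVec_self_star Δμ
  have hcross : (Ra + Re - Rae - Raeᵀ).PosSemidef := by
    rw [← conjTranspose_eq_transpose_of_trivial] at hblock ⊢
    exact hblock.add_sub_sub_of_fromBlocks
  have hDpsd : D.PosSemidef := by
    rw [hD, show vecMulVec Δμ Δμ + Ra + Re - Rae - Raeᵀ
        = vecMulVec Δμ Δμ + (Ra + Re - Rae - Raeᵀ) by abel]
    exact (hmean.add hcross).smul hcoeff
  exact ⟨hDpsd, hDpsd.dotProduct_mulVec_nonneg⟩
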